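/- arXiv:1409.6998 — 2 statements merged into one kernel-verified Lean document; each statement's English description precedes it below -/
import Mathlib

section
/- Let Ω ⊆ ℝⁿ be an open set of finite volume and let 1 < α < n/(n−1). If E ⊆ Ω is a measurable set with |E| > 0, finite perimeter, and whose closure is a compact subset of Ω, then P(E)/|E|^{1/α} > h_α(Ω). Consequently no α-Cheeger set of Ω is compactly contained in Ω: the boundary of any α-Cheeger set must touch ∂Ω. -/
open MeasureTheory ENNReal Metric Set

noncomputable def perimeter {n : ℕ} (E : Set (EuclideanSpace ℝ (Fin n))) : ℝ≥0∞ :=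
  ⨆ (φ : EuclideanSpace ℝ (Fin n) → EuclideanSpace ℝ (Fin n)) (_ : ContDiff ℝ 1 φ)
    (_ : HasCompactSupport φ) (_ : ∀ x, ‖φ x‖ ≤ 1),
    ENNReal.ofReal (∫ x in E, ∑ i, fderiv ℝ φ x (EuclideanSpace.single i 1) i)

noncomputable def cheegerRatio {n : ℕ} (α : ℝ) (E : Set (EuclideanSpace ℝ (Fin n))) : ℝ≥0∞ :=
  perimeter E / volume E ^ (1 / α)

noncomputable def cheegerConst {n : ℕ} (α : ℝ) (Ω : Set (EuclideanSpace ℝ (Fin n))) : ℝ≥0∞ :=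
  ⨅ (E : Set (EuclideanSpace ℝ (Fin n))) (_ : MeasurableSet E) (_ : E ⊆ Ω)
    (_ : 0 < volume E), cheegerRatio α E

def IsCheegerSet {n : ℕ} (α : ℝ) (Ω E : Set (EuclideanSpace ℝ (Fin n))) : Prop :=
  MeasurableSet E ∧ E ⊆ Ω ∧ 0 < volume E ∧ cheegerRatio α E = cheegerConst α Ω

/-!
If `closure E` is a compact subset of the open set `Ω`, some dilate `t • E` with `t > 1` still lies
in `Ω`. Dilating by `t` multiplies the perimeter by at most `t ^ (n - 1)` and the volume by `t ^ n`,
hence the `α`-Cheeger ratio by at most `t ^ (n - 1 - n / α) < 1`. As `E` is bounded with positive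
volume, testing against a cut-off radial field shows that its perimeter is positive, so the ratio
drops strictly. A Cheeger set has finite perimeter, because the Cheeger constant is finite: by the
divergence theorem, a small coordinate box inside `Ω` has finite perimeter.
-/

open Pointwise Filter Topology WithLp

variable {n : ℕ}

noncomputable def divergence (φ : EuclideanSpace ℝ (Fin n) → EuclideanSpace ℝ (Fin n))
    (x : EuclideanSpace ℝ (Fin n)) : ℝ :=
  ∑ i, fderiv ℝ φ x (EuclideanSpace.single i 1) i

def IsTestField (φ : EuclideanSpace ℝ (Fin n) → EuclideanSpace ℝ (Fin n)) : Prop :=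
  ContDiff ℝ 1 φ ∧ HasCompactSupport φ ∧ ∀ x, ‖φ x‖ ≤ 1

lemma ofReal_setIntegral_divergence_le_perimeter
    {φ : EuclideanSpace ℝ (Fin n) → EuclideanSpace ℝ (Fin n)} (hφ : IsTestField φ)
    (E : Set (EuclideanSpace ℝ (Fin n))) :
    ENNReal.ofReal (∫ x in E, divergence φ x) ≤ perimeter E :=
  le_iSup_of_le φ <| le_iSup_of_le hφ.1 <| le_iSup_of_le hφ.2.1 <| le_iSup_of_le hφ.2.2 le_rfl

lemma perimeter_le_of_forall_isTestField {E : Set (EuclideanSpace ℝ (Fin n))} {C : ℝ≥0∞}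
    (h : ∀ φ, IsTestField φ → ENNReal.ofReal (∫ x in E, divergence φ x) ≤ C) :
    perimeter E ≤ C :=
  iSup₂_le fun φ h₁ => iSup₂_le fun h₂ h₃ => h φ ⟨h₁, h₂, h₃⟩

lemma Filter.EventuallyEq.divergence_eq
    {φ ψ : EuclideanSpace ℝ (Fin n) → EuclideanSpace ℝ (Fin n)} {x : EuclideanSpace ℝ (Fin n)}
    (h : φ =ᶠ[𝓝 x] ψ) : divergence φ x = divergence ψ x := by
  simp only [divergence, h.fderiv_eq]

lemma divergence_const_smul_id (c : ℝ) (x : EuclideanSpace ℝ (Fin n)) :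
    divergence (fun y => c • y) x = n * c := by
  have h : HasFDerivAt (fun y => c • y) (c • ContinuousLinearMap.id ℝ _) x :=
    (hasFDerivAt_id x).const_smul c
  simp [divergence, h.fderiv, mul_comm]

lemma exists_isTestField_divergence_eq_on_ball {R : ℝ} (hR : 0 < R) :
    ∃ φ : EuclideanSpace ℝ (Fin n) → EuclideanSpace ℝ (Fin n),
      IsTestField φ ∧ ∀ x ∈ ball 0 R, divergence φ x = n / (2 * R) := by
  let f : ContDiffBump (0 : EuclideanSpace ℝ (Fin n)) := ⟨R, 2 * R, hR, by linarith⟩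
  refine ⟨fun x => ((2 * R)⁻¹ * f x) • x, ⟨?_, ?_, fun x => ?_⟩, fun x hx => ?_⟩
  · exact (contDiff_const.mul f.contDiff).smul contDiff_id
  · exact f.hasCompactSupport.mul_left.smul_right
  · dsimp only
    by_cases hx : ‖x‖ < 2 * R
    · rw [norm_smul, Real.norm_of_nonneg (by have := f.nonneg (x := x); positivity)]
      calc (2 * R)⁻¹ * f x * ‖x‖ ≤ (2 * R)⁻¹ * 1 * (2 * R) := by
            gcongr
            · exact f.le_one
          _ = 1 := by field_simp
    · rw [f.zero_of_le_dist (by simpa using hx)]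
      simp
  · have hf : (fun y => ((2 * R)⁻¹ * f y) • y) =ᶠ[𝓝 x] fun y => (2 * R)⁻¹ • y := by
      filter_upwards [isOpen_ball.mem_nhds hx] with y hy
      rw [f.one_of_mem_closedBall (ball_subset_closedBall hy), mul_one]
    rw [hf.divergence_eq, divergence_const_smul_id]
    field_simp

lemma perimeter_pos (hn : n ≠ 0) {E : Set (EuclideanSpace ℝ (Fin n))} (hE : MeasurableSet E)
    (hb : Bornology.IsBounded E) (hpos : 0 < volume E) : 0 < perimeter E := by
  obtain ⟨R, hR, hER⟩ := hb.subset_ball_lt 0 0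
  obtain ⟨φ, hφ, hdiv⟩ := exists_isTestField_divergence_eq_on_ball (n := n) hR
  have hint : ∫ x in E, divergence φ x = volume.real E * (n / (2 * R)) := by
    rw [setIntegral_congr_fun hE fun x hx => hdiv x (hER hx), setIntegral_const, smul_eq_mul]
  have hvol : 0 < volume.real E := ENNReal.toReal_pos hpos.ne' hb.measure_lt_top.ne
  have hn' : (0 : ℝ) < n := by exact_mod_cast Nat.pos_of_ne_zero hn
  refine (ENNReal.ofReal_pos.2 ?_).trans_le (ofReal_setIntegral_divergence_le_perimeter hφ E)
  rw [hint]
  positivity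

lemma divergence_comp_smul {ψ : EuclideanSpace ℝ (Fin n) → EuclideanSpace ℝ (Fin n)}
    (hψ : Differentiable ℝ ψ) (t : ℝ) (x : EuclideanSpace ℝ (Fin n)) :
    divergence (fun y => ψ (t • y)) x = t * divergence ψ (t • x) := by
  have h : HasFDerivAt (fun y => ψ (t • y)) ((fderiv ℝ ψ (t • x)).comp
      (t • ContinuousLinearMap.id ℝ _)) x :=
    (hψ _).hasFDerivAt.comp x ((hasFDerivAt_id x).const_smul t)
  simp [divergence, h.fderiv, Finset.mul_sum]

lemma IsTestField.comp_smul {ψ : EuclideanSpace ℝ (Fin n) → EuclideanSpace ℝ (Fin n)}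
    (hψ : IsTestField ψ) {t : ℝ} (ht : t ≠ 0) : IsTestField fun y => ψ (t • y) :=
  ⟨hψ.1.comp (contDiff_id.const_smul t),
    hψ.2.1.comp_isClosedEmbedding (Homeomorph.smulOfNeZero t ht).isClosedEmbedding,
    fun y => hψ.2.2 (t • y)⟩

lemma volume_smul (E : Set (EuclideanSpace ℝ (Fin n))) {t : ℝ} (ht : 0 ≤ t) :
    volume (t • E) = ENNReal.ofReal (t ^ n) * volume E := by
  rw [Measure.addHaar_smul_of_nonneg volume ht, finrank_euclideanSpace_fin]

lemma perimeter_smul_le (E : Set (EuclideanSpace ℝ (Fin n))) {t : ℝ} (ht : 0 < t) :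
    perimeter (t • E) ≤ ENNReal.ofReal (t ^ ((n : ℝ) - 1)) * perimeter E := by
  refine perimeter_le_of_forall_isTestField fun ψ hψ => ?_
  have hφ := hψ.comp_smul ht.ne'
  have key : ∫ x in t • E, divergence ψ x =
      t ^ ((n : ℝ) - 1) * ∫ x in E, divergence (fun y => ψ (t • y)) x := by
    simp_rw [divergence_comp_smul (hψ.1.differentiable one_ne_zero), integral_const_mul,
      Measure.setIntegral_comp_smul_of_pos _ _ _ ht, finrank_euclideanSpace_fin, smul_eq_mul,
      Real.rpow_sub ht, Real.rpow_natCast, Real.rpow_one]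
    field_simp
  rw [key, ENNReal.ofReal_mul (by positivity)]
  gcongr
  exact ofReal_setIntegral_divergence_le_perimeter hφ E

lemma cheegerConst_le_cheegerRatio {α : ℝ} {Ω E : Set (EuclideanSpace ℝ (Fin n))}
    (hE : MeasurableSet E) (hEΩ : E ⊆ Ω) (hpos : 0 < volume E) :
    cheegerConst α Ω ≤ cheegerRatio α E :=
  iInf₂_le_of_le E hE <| iInf₂_le hEΩ hpos

lemma cheegerRatio_smul_le {α : ℝ} (hα : 0 < α) (E : Set (EuclideanSpace ℝ (Fin n))) {t : ℝ}
    (ht : 0 < t) :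
    cheegerRatio α (t • E) ≤ ENNReal.ofReal (t ^ ((n : ℝ) - 1 - n / α)) * cheegerRatio α E := by
  have hvol : volume (t • E) ^ (1 / α) = ENNReal.ofReal (t ^ (n / α : ℝ)) * volume E ^ (1 / α) := by
    rw [volume_smul E ht.le, ENNReal.mul_rpow_of_nonneg _ _ (by positivity),
      ENNReal.ofReal_rpow_of_pos (by positivity), ← Real.rpow_natCast, ← Real.rpow_mul ht.le,
      mul_one_div]
  have hpow : ENNReal.ofReal (t ^ ((n : ℝ) - 1 - n / α)) =
      ENNReal.ofReal (t ^ ((n : ℝ) - 1)) / ENNReal.ofReal (t ^ (n / α : ℝ)) := by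
    rw [← ENNReal.ofReal_div_of_pos (by positivity), Real.rpow_sub ht]
  have hne : ENNReal.ofReal (t ^ (n / α : ℝ)) ≠ 0 := (ENNReal.ofReal_pos.2 (by positivity)).ne'
  calc cheegerRatio α (t • E)
      ≤ ENNReal.ofReal (t ^ ((n : ℝ) - 1)) * perimeter E /
          (ENNReal.ofReal (t ^ (n / α : ℝ)) * volume E ^ (1 / α)) := by
        rw [cheegerRatio, hvol]
        gcongr
        exact perimeter_smul_le E ht
    _ = _ := by
        rw [hpow, cheegerRatio,
          ENNReal.mul_div_mul_comm (Or.inl hne) (Or.inl ENNReal.ofReal_ne_top)]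

lemma cheegerRatio_smul_lt {α : ℝ} (hα : 0 < α) (hexp : (n : ℝ) - 1 < n / α)
    {E : Set (EuclideanSpace ℝ (Fin n))} (h₀ : cheegerRatio α E ≠ 0)
    (h_top : cheegerRatio α E ≠ ⊤) {t : ℝ} (ht : 1 < t) :
    cheegerRatio α (t • E) < cheegerRatio α E :=
  calc cheegerRatio α (t • E)
      ≤ ENNReal.ofReal (t ^ ((n : ℝ) - 1 - n / α)) * cheegerRatio α E :=
        cheegerRatio_smul_le hα E (by linarith)
    _ < 1 * cheegerRatio α E := by
        gcongr
        exact ENNReal.ofReal_lt_one.2 (Real.rpow_lt_one_of_one_lt_of_neg ht (by linarith))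
    _ = cheegerRatio α E := one_mul _

lemma perimeter_lt_top_of_cheegerRatio_lt_top {α : ℝ} (hα : 0 < α)
    {E : Set (EuclideanSpace ℝ (Fin n))} (hE : volume E ≠ ⊤) (h : cheegerRatio α E < ⊤) :
    perimeter E < ⊤ := by
  have hD : volume E ^ (1 / α) ≠ ⊤ := ENNReal.rpow_ne_top_of_nonneg (by positivity) hE
  exact lt_top_iff_ne_top.2 fun hP => h.ne (ENNReal.div_eq_top.2 (Or.inr ⟨hP, hD⟩))

lemma IsCompact.exists_one_lt_smul_subset {X : Type*} [TopologicalSpace X] [MulAction ℝ X]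
    [ContinuousSMul ℝ X] {K U : Set X} (hK : IsCompact K) (hU : IsOpen U) (hKU : K ⊆ U) :
    ∃ t : ℝ, 1 < t ∧ t • K ⊆ U := by
  have h : ∀ᶠ t in 𝓝 (1 : ℝ), ∀ x ∈ K, t • x ∈ U :=
    hK.eventually_forall_of_forall_eventually fun x hx =>
      (continuous_smul.tendsto (1, x)).eventually (hU.mem_nhds (by simpa using hKU hx))
  obtain ⟨t, htU, ht⟩ :=
    ((h.filter_mono (nhdsWithin_le_nhds (s := Ioi 1))).and self_mem_nhdsWithin).exists
  exact ⟨t, ht, smul_set_subset_iff.2 htU⟩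

lemma cheegerConst_lt_cheegerRatio_of_isCompact_closure {α : ℝ} (hα : 0 < α)
    (hexp : (n : ℝ) - 1 < n / α) (hn : n ≠ 0) {Ω E : Set (EuclideanSpace ℝ (Fin n))}
    (hΩ : IsOpen Ω) (hE : MeasurableSet E) (hpos : 0 < volume E) (hP : perimeter E < ⊤)
    (hK : IsCompact (closure E)) (hKΩ : closure E ⊆ Ω) :
    cheegerConst α Ω < cheegerRatio α E := by
  obtain ⟨t, ht, htΩ⟩ := hK.exists_one_lt_smul_subset hΩ hKΩ
  have hb : Bornology.IsBounded E := hK.isBounded.subset subset_closure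
  have hD : volume E ^ (1 / α) ≠ ⊤ :=
    ENNReal.rpow_ne_top_of_nonneg (by positivity) hb.measure_lt_top.ne
  have hD₀ : volume E ^ (1 / α) ≠ 0 := (ENNReal.rpow_pos hpos hb.measure_lt_top.ne).ne'
  have htE : 0 < volume (t • E) := by
    rw [volume_smul E (by positivity)]
    exact ENNReal.mul_pos (ENNReal.ofReal_pos.2 (by positivity)).ne' hpos.ne'
  calc cheegerConst α Ω ≤ cheegerRatio α (t • E) :=
        cheegerConst_le_cheegerRatio (hE.const_smul₀ t)
          ((smul_set_mono subset_closure).trans htΩ) htE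
    _ < cheegerRatio α E :=
        cheegerRatio_smul_lt hα hexp (ENNReal.div_pos (perimeter_pos hn hE hb hpos).ne' hD).ne'
          (ENNReal.div_lt_top hP.ne hD₀).ne ht

lemma setIntegral_divergence_preimage_Icc {m : ℕ} {a b : Fin (m + 1) → ℝ} (hle : a ≤ b)
    {φ : EuclideanSpace ℝ (Fin (m + 1)) → EuclideanSpace ℝ (Fin (m + 1))}
    (hφ : ContDiff ℝ 1 φ) :
    ∫ x in ofLp ⁻¹' Icc a b, divergence φ x =
      ∑ i, ((∫ y in Icc (a ∘ i.succAbove) (b ∘ i.succAbove),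
          φ (toLp 2 (i.insertNth (b i) y)) i) -
        ∫ y in Icc (a ∘ i.succAbove) (b ∘ i.succAbove), φ (toLp 2 (i.insertNth (a i) y)) i) := by
  let L := EuclideanSpace.equiv (Fin (m + 1)) ℝ
  have hdiv : Continuous (divergence φ) :=
    continuous_finsetSum _ fun i _ => (continuous_apply i).comp <|
      (PiLp.continuous_ofLp _ _).comp
        ((hφ.continuous_fderiv one_ne_zero).clm_apply continuous_const)
  refine ((PiLp.volume_preserving_ofLp _).setIntegral_preimage_emb
    L.toHomeomorph.measurableEmbedding (fun y => divergence φ (toLp 2 y)) (Icc a b)).trans ?_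
  refine integral_divergence_of_hasFDerivAt_off_countable a b hle (fun y => ofLp (φ (toLp 2 y)))
    (fun y => (L : _ →L[ℝ] _).comp ((fderiv ℝ φ (toLp 2 y)).comp (L.symm : _ →L[ℝ] _))) ∅
    countable_empty ?_ (fun y _ => ?_) ?_
  · exact (L.continuous.comp (hφ.continuous.comp L.symm.continuous)).continuousOn
  · exact L.hasFDerivAt.comp y
      (((hφ.differentiable one_ne_zero) _).hasFDerivAt.comp y L.symm.hasFDerivAt)
  · exact (hdiv.comp L.symm.continuous).continuousOn.integrableOn_compact isCompact_Icc

lemma perimeter_preimage_Icc_le {m : ℕ} {a b : Fin (m + 1) → ℝ} (hle : a ≤ b) :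
    perimeter (ofLp ⁻¹' Icc a b : Set (EuclideanSpace ℝ (Fin (m + 1)))) ≤
      ENNReal.ofReal
        (∑ i : Fin (m + 1), 2 * volume.real (Icc (a ∘ i.succAbove) (b ∘ i.succAbove))) := by
  refine perimeter_le_of_forall_isTestField fun φ hφ => ENNReal.ofReal_le_ofReal ?_
  rw [setIntegral_divergence_preimage_Icc hle hφ.1]
  refine Finset.sum_le_sum fun i _ => ?_
  have hface : ∀ v, |∫ y in Icc (a ∘ i.succAbove) (b ∘ i.succAbove),
      φ (toLp 2 (i.insertNth v y)) i| ≤ volume.real (Icc (a ∘ i.succAbove) (b ∘ i.succAbove)) :=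
    fun v => by
      simpa using norm_setIntegral_le_of_norm_le_const isCompact_Icc.measure_lt_top
        fun y _ => (PiLp.norm_apply_le _ i).trans (hφ.2.2 _)
  linarith [abs_le.1 (hface (b i)), abs_le.1 (hface (a i))]

lemma IsOpen.exists_Icc_subset {ι : Type*} [Fintype ι] {U : Set (ι → ℝ)} (hU : IsOpen U)
    {x : ι → ℝ} (hx : x ∈ U) : ∃ a b : ι → ℝ, (∀ i, a i < b i) ∧ Icc a b ⊆ U := by
  obtain ⟨r, hr, hrU⟩ := nhds_basis_closedBall.mem_iff.1 (hU.mem_nhds hx)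
  refine ⟨fun i => x i - r, fun i => x i + r, fun i => by linarith, ?_⟩
  rw [closedBall_pi _ hr.le] at hrU
  rw [← pi_univ_Icc]
  simpa only [Real.closedBall_eq_Icc] using hrU

lemma cheegerConst_lt_top (hn : n ≠ 0) (α : ℝ) {Ω : Set (EuclideanSpace ℝ (Fin n))}
    (hΩ : IsOpen Ω) (hne : Ω.Nonempty) : cheegerConst α Ω < ⊤ := by
  obtain ⟨m, rfl⟩ := Nat.exists_eq_succ_of_ne_zero hn
  obtain ⟨x, hx⟩ := hne
  obtain ⟨a, b, hab, habΩ⟩ :=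
    (hΩ.preimage (PiLp.continuous_toLp 2 _)).exists_Icc_subset (x := ofLp x) hx
  set B : Set (EuclideanSpace ℝ (Fin (m + 1))) := ofLp ⁻¹' Icc a b
  have hvol : volume B = ∏ i, ENNReal.ofReal (b i - a i) := by
    rw [(PiLp.volume_preserving_ofLp _).measure_preimage measurableSet_Icc.nullMeasurableSet,
      Real.volume_Icc_pi]
  have hpos : 0 < volume B := by
    rw [hvol]
    exact CanonicallyOrderedAdd.prod_pos.2 fun i _ => ENNReal.ofReal_pos.2 (by linarith [hab i])
  have hfin : volume B ≠ ⊤ := by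
    rw [hvol]
    exact ENNReal.prod_ne_top fun i _ => ENNReal.ofReal_ne_top
  calc cheegerConst α Ω ≤ cheegerRatio α B :=
        cheegerConst_le_cheegerRatio
          (measurableSet_Icc.preimage (PiLp.continuous_ofLp 2 _).measurable)
          (fun y hy => by simpa using habΩ hy) hpos
    _ < ⊤ := ENNReal.div_lt_top
        ((perimeter_preimage_Icc_le fun i => (hab i).le).trans_lt ENNReal.ofReal_lt_top).ne
        (ENNReal.rpow_pos hpos hfin).ne'

lemma one_lt_and_sub_one_lt_div_of_lt_div_sub_one {α : ℝ} (h₁ : 1 < α)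
    (h₂ : α < (n : ℝ) / ((n : ℝ) - 1)) : 1 < n ∧ (n : ℝ) - 1 < n / α := by
  have hn : 1 < n := by
    by_contra! hn
    interval_cases n <;> norm_num at h₂ <;> linarith
  have hn' : (0 : ℝ) < n - 1 := by
    have : (1 : ℝ) < n := by exact_mod_cast hn
    linarith
  refine ⟨hn, (lt_div_iff₀ (by linarith)).2 ?_⟩
  nlinarith [(lt_div_iff₀ hn').1 h₂]

theorem no_compactly_contained_cheegerSet_general {n : ℕ} (α : ℝ) (h1 : 1 < α)
    (h2 : α < (n : ℝ) / ((n : ℝ) - 1)) (Ω : Set (EuclideanSpace ℝ (Fin n)))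
    (hop : IsOpen Ω) :
    (∀ E : Set (EuclideanSpace ℝ (Fin n)), MeasurableSet E → E ⊆ Ω → 0 < volume E →
      perimeter E < ⊤ → IsCompact (closure E) → closure E ⊆ Ω →
      cheegerConst α Ω < cheegerRatio α E) ∧
    ∀ E : Set (EuclideanSpace ℝ (Fin n)), IsCheegerSet α Ω E →
      ¬ (IsCompact (closure E) ∧ closure E ⊆ Ω) := by
  obtain ⟨hn, hexp⟩ := one_lt_and_sub_one_lt_div_of_lt_div_sub_one h1 h2
  have hα : 0 < α := by linarith
  have hlt {E : Set (EuclideanSpace ℝ (Fin n))} :=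
    cheegerConst_lt_cheegerRatio_of_isCompact_closure (E := E) hα hexp (by omega) hop
  refine ⟨fun E hE _ hpos hP hK hKΩ => hlt hE hpos hP hK hKΩ,
    fun E ⟨hE, hEΩ, hpos, hEq⟩ ⟨hK, hKΩ⟩ => ?_⟩
  have hP : perimeter E < ⊤ :=
    perimeter_lt_top_of_cheegerRatio_lt_top hα
      (hK.isBounded.subset subset_closure).measure_lt_top.ne
      (hEq ▸ cheegerConst_lt_top (by omega) α hop
        ((nonempty_of_measure_ne_zero hpos.ne').mono hEΩ))
  exact (hlt hE hpos hP hK hKΩ).ne hEq.symm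

/-- for `Ω` open of finite volume and `1 < α < n/(n-1)`, every measurable
set of positive measure and finite perimeter compactly contained in `Ω` has α-Cheeger
ratio strictly larger than `h_α(Ω)`; hence no α-Cheeger set of `Ω` is compactly
contained in `Ω`. -/
theorem no_compactly_contained_cheegerSet {n : ℕ} (α : ℝ) (h1 : 1 < α)
    (h2 : α < (n : ℝ) / ((n : ℝ) - 1)) (Ω : Set (EuclideanSpace ℝ (Fin n)))
    (hop : IsOpen Ω) (hΩ : volume Ω < ⊤) :
    (∀ E : Set (EuclideanSpace ℝ (Fin n)), MeasurableSet E → E ⊆ Ω → 0 < volume E →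
      perimeter E < ⊤ → IsCompact (closure E) → closure E ⊆ Ω →
      cheegerConst α Ω < cheegerRatio α E) ∧
    ∀ E : Set (EuclideanSpace ℝ (Fin n)), IsCheegerSet α Ω E →
      ¬ (IsCompact (closure E) ∧ closure E ⊆ Ω) :=
  no_compactly_contained_cheegerSet_general α h1 h2 Ω hop
end

section
/- Optimal rounding radius: let α ∈ (1, 2) and 2 ≤ L < M(α) + 2, where M(α) = (π/2)·(2−α)/(α−1). Then the function f(t) = (2L + 4 − (8 − 2π)t) / (2L − (4 − π)t²)^{1/α}, which gives the α-Cheeger ratio of the rectangle R_L with corners rounded at radius t, attains over t ∈ (0, 1] its unique minimum at t = r = ( L + 2 − √( (L+2)² − 2(4−π)(2−α)Lα ) ) / ( (4−π)(2−α) ), the smaller root of the quadratic (4−π)(2−α)t² − (2L+4)t + 2Lα = 0, and this r lies in (0, 1). -/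
open MeasureTheory ENNReal Metric Set

/-- The open rectangle `R_L = (-L/2, L/2) × (-1, 1)` in the Euclidean plane. -/
def Rect (L : ℝ) : Set (EuclideanSpace ℝ (Fin 2)) :=
  {p | p 0 ∈ Set.Ioo (-(L / 2)) (L / 2) ∧ p 1 ∈ Set.Ioo (-1 : ℝ) 1}

/-- The length `M(α) = (π/2)·(2-α)/(α-1)`. -/
noncomputable def Mlen (α : ℝ) : ℝ := Real.pi / 2 * ((2 - α) / (α - 1))

/-- The (open) stadium of length `M` centered at `(c, 0)`: the set of points at distance
less than `1` from the horizontal segment `[c - M/2, c + M/2] × {0}`; its horizontal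
translates are obtained by varying `c`. -/
noncomputable def Stadium (M c : ℝ) : Set (EuclideanSpace ℝ (Fin 2)) :=
  {p | Metric.infDist p
    {q : EuclideanSpace ℝ (Fin 2) | q 0 ∈ Set.Icc (c - M / 2) (c + M / 2) ∧ q 1 = 0} < 1}

/-- The rectangle `R_L` with the four corners cut away by quarter-circles of radius `t`:
the set of points at distance less than `t` from the closed inner rectangle
`[-L/2 + t, L/2 - t] × [-1 + t, 1 - t]`. -/
noncomputable def RoundedRect (L t : ℝ) : Set (EuclideanSpace ℝ (Fin 2)) :=
  {p | Metric.infDist p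
    {q : EuclideanSpace ℝ (Fin 2) | q 0 ∈ Set.Icc (-(L / 2) + t) (L / 2 - t) ∧
      q 1 ∈ Set.Icc (-1 + t) (1 - t)} < t}

/-- The optimal rounding radius for the rectangle `R_L`:
`r = (L + 2 - √((L+2)² - 2(4-π)(2-α)Lα)) / ((4-π)(2-α))`. -/
noncomputable def rRad (α L : ℝ) : ℝ :=
  (L + 2 - Real.sqrt ((L + 2) ^ 2 - 2 * (4 - Real.pi) * (2 - α) * L * α)) /
    ((4 - Real.pi) * (2 - α))

/-! With `D(t) = 2L - (4-π)t²` the area and `q(t) = (4-π)(2-α)t² - (2L+4)t + 2Lα`, the quotient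
rule gives `f'(t) = -2(4-π) q(t) / (α D(t)^(1 + 1/α))`, so `f` falls while `q > 0` and rises
while `q < 0`. Since `q(0) = 2Lα > 0` and `q(1) < 0` is exactly the condition `L < M(α) + 2`,
the smaller root `r` of `q` lies in `(0, 1)`, the larger one beyond `1`, and `q` changes sign on
`[0, 1]` only at `r`. -/

open Real

noncomputable def smallRoot (c B A : ℝ) : ℝ := (B - √(B ^ 2 - c * A)) / c

section smallRoot

variable {c B A : ℝ}

theorem smallRoot_isRoot (hc : c ≠ 0) (hd : c * A ≤ B ^ 2) :
    c * smallRoot c B A ^ 2 - 2 * B * smallRoot c B A + A = 0 := by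
  have hs := sq_sqrt (sub_nonneg.2 hd)
  unfold smallRoot
  field_simp
  linear_combination hs

theorem quadratic_eq_mul_sub_smallRoot (hc : c ≠ 0) (hd : c * A ≤ B ^ 2) (t : ℝ) :
    c * t ^ 2 - 2 * B * t + A = (t - smallRoot c B A) * (c * (t + smallRoot c B A) - 2 * B) := by
  linear_combination smallRoot_isRoot hc hd

theorem mul_lt_sq_of_quadratic_one_neg (hc : 0 < c) (h1 : c - 2 * B + A < 0) : c * A < B ^ 2 := by
  nlinarith [sq_nonneg (B - c)]

theorem smallRoot_pos (hc : 0 < c) (hA : 0 < A) (h1 : c - 2 * B + A < 0) : 0 < smallRoot c B A := by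
  have hB : 0 < B := by linarith
  refine div_pos (sub_pos.2 ((sqrt_lt' hB).2 ?_)) hc
  nlinarith

theorem smallRoot_lt_one (hc : 0 < c) (h1 : c - 2 * B + A < 0) : smallRoot c B A < 1 := by
  rw [smallRoot, div_lt_one hc, sub_lt_comm]
  rcases lt_or_ge (B - c) 0 with hBc | hBc
  · exact hBc.trans_le (sqrt_nonneg _)
  · exact (lt_sqrt hBc).2 (by nlinarith)

theorem quadratic_pos_of_lt_smallRoot (hc : 0 < c) (hd : c * A ≤ B ^ 2) {t : ℝ}
    (ht : t < smallRoot c B A) : 0 < c * t ^ 2 - 2 * B * t + A := by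
  have hr : c * smallRoot c B A ≤ B := by
    rw [smallRoot, mul_div_cancel₀ _ hc.ne']
    exact sub_le_self _ (sqrt_nonneg _)
  rw [quadratic_eq_mul_sub_smallRoot hc.ne' hd]
  exact mul_pos_of_neg_of_neg (by linarith) (by nlinarith)

theorem quadratic_neg_of_smallRoot_lt (hc : 0 < c) (h1 : c - 2 * B + A < 0) {t : ℝ}
    (ht : smallRoot c B A < t) (ht1 : t ≤ 1) : c * t ^ 2 - 2 * B * t + A < 0 := by
  have hd := (mul_lt_sq_of_quadratic_one_neg hc h1).le
  have hr1 := smallRoot_lt_one hc h1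
  have h1' := quadratic_eq_mul_sub_smallRoot hc.ne' hd 1
  -- `q(1) < 0` puts `1` strictly between the two roots
  have hfac : c * (1 + smallRoot c B A) - 2 * B < 0 := by
    by_contra! h
    nlinarith [mul_nonneg (sub_pos.2 hr1).le h]
  rw [quadratic_eq_mul_sub_smallRoot hc.ne' hd]
  exact mul_neg_of_pos_of_neg (by linarith) (by nlinarith)

end smallRoot

theorem StrictAntiOn.lt_of_strictMonoOn {α β : Type*} [LinearOrder α] [Preorder β] {f : α → β}
    {a r b t : α} (hanti : StrictAntiOn f (Icc a r)) (hmono : StrictMonoOn f (Icc r b))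
    (har : a ≤ r) (hrb : r ≤ b) (ht : t ∈ Icc a b) (htr : t ≠ r) : f r < f t := by
  rcases htr.lt_or_gt with htr | htr
  · exact hanti ⟨ht.1, htr.le⟩ ⟨har, le_rfl⟩ htr
  · exact hmono ⟨le_rfl, hrb⟩ ⟨htr.le, ht.2⟩ htr

noncomputable def roundedRectRatio (α L t : ℝ) : ℝ :=
  (2 * L + 4 - (8 - 2 * π) * t) / (2 * L - (4 - π) * t ^ 2) ^ (1 / α)

section roundedRect

variable {α L : ℝ}

theorem rRad_eq_smallRoot (α L : ℝ) :
    rRad α L = smallRoot ((4 - π) * (2 - α)) (L + 2) (2 * L * α) := by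
  unfold rRad smallRoot
  ring_nf

theorem quadratic_one_neg_iff_lt_Mlen_add_two (h1 : 1 < α) :
    (4 - π) * (2 - α) - 2 * (L + 2) + 2 * L * α < 0 ↔ L < Mlen α + 2 := by
  rw [Mlen, ← sub_lt_iff_lt_add, mul_div_assoc', lt_div_iff₀ (by linarith)]
  constructor <;> intro h <;> linarith

theorem roundedRect_area_pos (hL : 1 ≤ L) {t : ℝ} (ht : t ∈ Icc 0 1) :
    0 < 2 * L - (4 - π) * t ^ 2 := by
  nlinarith [pi_gt_three, ht.1, ht.2]

theorem hasDerivAt_roundedRectRatio (hα : α ≠ 0) {t : ℝ} (hD : 0 < 2 * L - (4 - π) * t ^ 2) :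
    HasDerivAt (roundedRectRatio α L)
      (-(2 * (4 - π) * ((4 - π) * (2 - α) * t ^ 2 - 2 * (L + 2) * t + 2 * L * α)) /
        (α * (2 * L - (4 - π) * t ^ 2) * (2 * L - (4 - π) * t ^ 2) ^ (1 / α))) t := by
  have hN : HasDerivAt (fun t => 2 * L + 4 - (8 - 2 * π) * t) (-(8 - 2 * π)) t := by
    simpa using ((hasDerivAt_id t).const_mul (8 - 2 * π)).const_sub (2 * L + 4)
  have hA : HasDerivAt (fun t => 2 * L - (4 - π) * t ^ 2) (-((4 - π) * (2 * t))) t := by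
    simpa using ((hasDerivAt_pow 2 t).const_mul (4 - π)).const_sub (2 * L)
  have hpow := rpow_pos_of_pos hD (1 / α)
  refine (hN.div (hA.rpow_const (p := 1 / α) (.inl hD.ne')) hpow.ne').congr_deriv ?_
  rw [rpow_sub_one hD.ne']
  field_simp
  ring

theorem continuousOn_roundedRectRatio (hα : α ≠ 0) (hL : 1 ≤ L) :
    ContinuousOn (roundedRectRatio α L) (Icc 0 1) := fun _ ht =>
  (hasDerivAt_roundedRectRatio hα (roundedRect_area_pos hL ht)).continuousAt.continuousWithinAt

theorem cornerCoeff_pos (h2 : α < 2) : 0 < (4 - π) * (2 - α) :=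
  mul_pos (by linarith [pi_lt_four]) (by linarith)

theorem rRad_mem_Ioo (h1 : 1 < α) (h2 : α < 2) (hL : 0 < L) (hLM : L < Mlen α + 2) :
    rRad α L ∈ Ioo 0 1 := by
  have hq1 := (quadratic_one_neg_iff_lt_Mlen_add_two h1).2 hLM
  rw [rRad_eq_smallRoot]
  exact ⟨smallRoot_pos (cornerCoeff_pos h2) (by positivity) hq1, smallRoot_lt_one (cornerCoeff_pos h2) hq1⟩

theorem rRad_isRoot (h1 : 1 < α) (h2 : α < 2) (hLM : L < Mlen α + 2) :
    (4 - π) * (2 - α) * rRad α L ^ 2 - 2 * (L + 2) * rRad α L + 2 * L * α = 0 := by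
  rw [rRad_eq_smallRoot]
  exact smallRoot_isRoot (cornerCoeff_pos h2).ne' (mul_lt_sq_of_quadratic_one_neg (cornerCoeff_pos h2)
    ((quadratic_one_neg_iff_lt_Mlen_add_two h1).2 hLM)).le

theorem strictAntiOn_roundedRectRatio (h1 : 1 < α) (h2 : α < 2) (hL : 1 ≤ L)
    (hLM : L < Mlen α + 2) : StrictAntiOn (roundedRectRatio α L) (Icc 0 (rRad α L)) := by
  have hsub : Icc 0 (rRad α L) ⊆ Icc 0 1 :=
    Icc_subset_Icc le_rfl (rRad_mem_Ioo h1 h2 (by linarith) hLM).2.le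
  have hd := mul_lt_sq_of_quadratic_one_neg (cornerCoeff_pos h2)
    ((quadratic_one_neg_iff_lt_Mlen_add_two h1).2 hLM)
  refine strictAntiOn_of_hasDerivWithinAt_neg (convex_Icc _ _)
    ((continuousOn_roundedRectRatio (by linarith) hL).mono hsub)
    (fun t ht => (hasDerivAt_roundedRectRatio (by linarith)
      (roundedRect_area_pos hL (hsub (interior_subset ht)))).hasDerivWithinAt) fun t ht => ?_
  have hD := roundedRect_area_pos hL (hsub (interior_subset ht))
  rw [interior_Icc, rRad_eq_smallRoot] at ht
  have hq := quadratic_pos_of_lt_smallRoot (cornerCoeff_pos h2) hd.le ht.2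
  exact div_neg_of_neg_of_pos (neg_neg_of_pos (mul_pos (by linarith [pi_lt_four]) hq))
    (mul_pos (mul_pos (by linarith) hD) (rpow_pos_of_pos hD _))

theorem strictMonoOn_roundedRectRatio (h1 : 1 < α) (h2 : α < 2) (hL : 1 ≤ L)
    (hLM : L < Mlen α + 2) : StrictMonoOn (roundedRectRatio α L) (Icc (rRad α L) 1) := by
  have hsub : Icc (rRad α L) 1 ⊆ Icc 0 1 :=
    Icc_subset_Icc (rRad_mem_Ioo h1 h2 (by linarith) hLM).1.le le_rfl
  have hq1 := (quadratic_one_neg_iff_lt_Mlen_add_two h1).2 hLM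
  refine strictMonoOn_of_hasDerivWithinAt_pos (convex_Icc _ _)
    ((continuousOn_roundedRectRatio (by linarith) hL).mono hsub)
    (fun t ht => (hasDerivAt_roundedRectRatio (by linarith)
      (roundedRect_area_pos hL (hsub (interior_subset ht)))).hasDerivWithinAt) fun t ht => ?_
  have hD := roundedRect_area_pos hL (hsub (interior_subset ht))
  rw [interior_Icc, rRad_eq_smallRoot] at ht
  have hq := quadratic_neg_of_smallRoot_lt (cornerCoeff_pos h2) hq1 ht.1 ht.2.le
  exact div_pos (neg_pos.2 (mul_neg_of_pos_of_neg (by linarith [pi_lt_four]) hq))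
    (mul_pos (mul_pos (by linarith) hD) (rpow_pos_of_pos hD _))

end roundedRect

/-- optimal rounding radius: for `α ∈ (1,2)` and `2 ≤ L < M(α) + 2`,
the function `f(t) = (2L + 4 - (8-2π)t) / (2L - (4-π)t²)^(1/α)` (the α-Cheeger ratio
of `R_L` with corners rounded at radius `t`) attains over `(0,1]` its unique minimum
at `t = r`, the smaller root of `(4-π)(2-α)t² - (2L+4)t + 2Lα = 0`, and `r ∈ (0,1)`. -/
theorem roundedRect_ratio_unique_min (α L : ℝ) (h1 : 1 < α) (h2 : α < 2)
    (hL1 : 2 ≤ L) (hL2 : L < Mlen α + 2) :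
    0 < rRad α L ∧ rRad α L < 1 ∧
    (4 - Real.pi) * (2 - α) * rRad α L ^ 2 - (2 * L + 4) * rRad α L + 2 * L * α = 0 ∧
    (∀ t ∈ Set.Ioc (0 : ℝ) 1,
      (2 * L + 4 - (8 - 2 * Real.pi) * rRad α L) /
          (2 * L - (4 - Real.pi) * rRad α L ^ 2) ^ (1 / α) ≤
        (2 * L + 4 - (8 - 2 * Real.pi) * t) / (2 * L - (4 - Real.pi) * t ^ 2) ^ (1 / α)) ∧
    ∀ t ∈ Set.Ioc (0 : ℝ) 1,
      (2 * L + 4 - (8 - 2 * Real.pi) * t) / (2 * L - (4 - Real.pi) * t ^ 2) ^ (1 / α) =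
        (2 * L + 4 - (8 - 2 * Real.pi) * rRad α L) /
          (2 * L - (4 - Real.pi) * rRad α L ^ 2) ^ (1 / α) →
      t = rRad α L := by
  obtain ⟨hr0, hr1⟩ := rRad_mem_Ioo h1 h2 (by linarith) hL2
  have hmin : ∀ t ∈ Ioc (0 : ℝ) 1, t ≠ rRad α L →
      roundedRectRatio α L (rRad α L) < roundedRectRatio α L t := fun t ht htr =>
    (strictAntiOn_roundedRectRatio h1 h2 (by linarith) hL2).lt_of_strictMonoOn
      (strictMonoOn_roundedRectRatio h1 h2 (by linarith) hL2) hr0.le hr1.le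
      (Ioc_subset_Icc_self ht) htr
  refine ⟨hr0, hr1, by linear_combination rRad_isRoot h1 h2 hL2, fun t ht => ?_,
    fun t ht heq => ?_⟩
  · rcases eq_or_ne t (rRad α L) with rfl | htr
    · exact le_rfl
    · exact (hmin t ht htr).le
  · by_contra htr
    exact (hmin t ht htr).ne' heq
end
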